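/- Every threshold graph G is maximally locally connected: for every pair of distinct vertices v, w of G, κ(v,w) = min{deg(v), deg(w)}. -/

import Mathlib

open SimpleGraph

namespace ConnDim

open Classical in
/-- The local connectivity `κ(a,b)`: the maximum number of internally vertex-disjoint
`a`-`b` paths, with `κ(a,a) = ∞`. -/
noncomputable def localConn {V : Type*} (G : SimpleGraph V) (a b : V) : ℕ∞ :=
  if a = b then ⊤
  else sSup {n : ℕ∞ | ∃ Ps : Finset (G.Path a b),
    (∀ p ∈ Ps, ∀ q ∈ Ps, p ≠ q → ∀ x : V,
        x ∈ p.1.support → x ∈ q.1.support → x = a ∨ x = b) ∧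
    (Ps.card : ℕ∞) = n}

/-- A set `W` is connectivity resolving if vertices are determined by their
local connectivities to the elements of `W`. -/
def ConnResolving {V : Type*} (G : SimpleGraph V) (W : Set V) : Prop :=
  ∀ u v : V, (∀ w ∈ W, localConn G u w = localConn G v w) → u = v

/-- The connectivity dimension: minimum cardinality of a connectivity resolving set. -/
noncomputable def cdim {V : Type*} (G : SimpleGraph V) : ℕ :=
  sInf {n : ℕ | ∃ W : Set V, ConnResolving G W ∧ W.ncard = n}

/-- A set `W` is metric resolving if vertices are determined by their distances
to the elements of `W`. -/
def MetricResolving {V : Type*} (G : SimpleGraph V) (W : Set V) : Prop :=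
  ∀ u v : V, (∀ w ∈ W, G.dist u w = G.dist v w) → u = v

/-- The metric dimension: minimum cardinality of a metric resolving set. -/
noncomputable def mdim {V : Type*} (G : SimpleGraph V) : ℕ :=
  sInf {n : ℕ | ∃ W : Set V, MetricResolving G W ∧ W.ncard = n}

/-- `G` forces a `𝟙` representation if every minimum resolving set (basis) `B` admits a
vertex whose local connectivity to every element of `B` equals `1`. -/
def ForcesOne {V : Type*} (G : SimpleGraph V) : Prop :=
  ∀ B : Set V, ConnResolving G B → B.ncard = cdim G →
    ∃ v : V, ∀ b ∈ B, localConn G v b = 1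

/-- A cut vertex of a connected graph: its removal disconnects the graph. -/
def IsCutVertex {V : Type*} (G : SimpleGraph V) (v : V) : Prop :=
  G.Connected ∧ ¬ (G.induce {u : V | u ≠ v}).Connected

/-- A block of `G`: a maximal connected subgraph of `G` without a cut vertex of itself. -/
def IsBlock {V : Type*} (G : SimpleGraph V) (H : G.Subgraph) : Prop :=
  H.coe.Connected ∧ (∀ v, ¬ IsCutVertex H.coe v) ∧
  ∀ H' : G.Subgraph, H ≤ H' → H'.coe.Connected → (∀ v, ¬ IsCutVertex H'.coe v) → H' = H

/-- The number of blocks of `G`. -/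
noncomputable def numBlocks {V : Type*} (G : SimpleGraph V) : ℕ :=
  Nat.card {H : G.Subgraph // IsBlock G H}

/-- Two vertices are twins if they have the same neighborhood in the graph with
both of them deleted. -/
def AreTwins {V : Type*} (G : SimpleGraph V) (a b : V) : Prop :=
  ∀ x : V, x ≠ a → x ≠ b → (G.Adj a x ↔ G.Adj b x)

/-- The threshold graph generated by a binary sequence `L` (`false` = isolated vertex,
`true` = dominating vertex): two vertices are adjacent iff the later one was added
as a dominating vertex. -/
def thresholdGraph (L : List Bool) : SimpleGraph (Fin L.length) :=
  SimpleGraph.fromRel (fun i j => i < j ∧ L.get j = true)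

/-- The alternating binary sequence `0,1,0,1,…,0,1` of length `2 * n`. -/
def altList (n : ℕ) : List Bool := (List.replicate n [false, true]).flatten

/-- The join of two graphs on disjoint vertex sets by the bridge `v₁v₂`. -/
def bridgeJoin {V₁ V₂ : Type*} (G₁ : SimpleGraph V₁) (G₂ : SimpleGraph V₂)
    (v₁ : V₁) (v₂ : V₂) : SimpleGraph (V₁ ⊕ V₂) :=
  G₁.map Function.Embedding.inl ⊔ G₂.map Function.Embedding.inr
    ⊔ SimpleGraph.fromEdgeSet {s(Sum.inl v₁, Sum.inr v₂)}

/-- The graph obtained from `G` by attaching a new leaf (the vertex `none`) to `u`. -/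
def attachLeaf {V : Type*} (G : SimpleGraph V) (u : V) : SimpleGraph (Option V) :=
  G.map Function.Embedding.some ⊔ SimpleGraph.fromEdgeSet {s(some u, (none : Option V))}

/-- The chain of `t` triangles (triangle `i` has vertices `inl i.castSucc`, `inl i.succ`,
`inr (inl i)`), with a leaf `inr (inr ())` attached to the end vertex `inl 0`. -/
def triChain (t : ℕ) : SimpleGraph (Fin (t+1) ⊕ Fin t ⊕ Unit) :=
  SimpleGraph.fromRel (fun a b =>
    match a, b with
    | Sum.inl i, Sum.inl j => (i : ℕ) + 1 = (j : ℕ)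
    | Sum.inr (Sum.inl i), Sum.inl j => j = Fin.castSucc i ∨ j = Fin.succ i
    | Sum.inr (Sum.inr _), Sum.inl j => j = 0
    | _, _ => False)


/-!
For distinct `a`, `b`, internally disjoint `a`-`b` paths leave `a` through distinct neighbours,
so `κ(a,b) ≤ min (deg a) (deg b)`. Conversely, if every neighbour of `a` other than `b` is also a
neighbour of `b`, the edge `ab` (if present) and the paths `a x b` show `κ(a,b) = deg a`, which
forces `deg a ≤ deg b`. In a threshold graph neighbourhoods are nested in exactly this way.
-/

section LocalConnectivity

variable {V : Type*} {G : SimpleGraph V} {a b : V}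

def PairwiseInternallyDisjoint (Ps : Finset (G.Path a b)) : Prop :=
  ∀ p ∈ Ps, ∀ q ∈ Ps, p ≠ q → ∀ x : V,
    x ∈ p.1.support → x ∈ q.1.support → x = a ∨ x = b

lemma localConn_of_ne (hab : a ≠ b) :
    localConn G a b =
      sSup {n : ℕ∞ | ∃ Ps : Finset (G.Path a b),
        PairwiseInternallyDisjoint Ps ∧ (Ps.card : ℕ∞) = n} := by
  rw [localConn, if_neg hab]
  rfl

lemma PairwiseInternallyDisjoint.image_reverse [DecidableEq V] {Ps : Finset (G.Path a b)}
    (hPs : PairwiseInternallyDisjoint Ps) : PairwiseInternallyDisjoint (Ps.image Path.reverse) := by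
  intro p hp q hq hpq x hxp hxq
  obtain ⟨p, hp', rfl⟩ := Finset.mem_image.1 hp
  obtain ⟨q, hq', rfl⟩ := Finset.mem_image.1 hq
  simp only [Path.reverse_coe, Walk.support_reverse, List.mem_reverse] at hxp hxq
  exact (hPs p hp' q hq' (fun h => hpq (h ▸ rfl)) x hxp hxq).symm

lemma localConn_comm (G : SimpleGraph V) (a b : V) : localConn G a b = localConn G b a := by
  classical
  suffices ∀ a b : V, a ≠ b → localConn G a b ≤ localConn G b a by
    rcases eq_or_ne a b with rfl | hab
    · rfl
    · exact le_antisymm (this a b hab) (this b a hab.symm)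
  intro a b hab
  rw [localConn_of_ne hab, localConn_of_ne hab.symm]
  refine sSup_le_sSup ?_
  rintro _ ⟨Ps, hPs, rfl⟩
  refine ⟨Ps.image Path.reverse, hPs.image_reverse, ?_⟩
  have h_inj : Function.Injective (Path.reverse : G.Path a b → G.Path b a) := fun p q h =>
    Subtype.ext (Walk.reverse_injective (congrArg Subtype.val h))
  rw [Finset.card_image_of_injective _ h_inj]

lemma path_eq_of_snd_eq (hab : a ≠ b) {p q : G.Path a b} (hp : p.1.snd = b)
    (hq : q.1.snd = b) : p = q := by
  have h_edge : ∀ r : G.Path a b, r.1.snd = b → s(a, b) ∈ r.1.edges := fun r hr => by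
    simpa [hr] using r.1.mk_start_snd_mem_edges (Walk.not_nil_of_ne hab)
  exact Subtype.ext <| (p.2.eq_adj_toWalk_of_mem_edges (h_edge p hp)).trans
    (q.2.eq_adj_toWalk_of_mem_edges (h_edge q hq)).symm

lemma PairwiseInternallyDisjoint.card_le_encard_neighborSet (hab : a ≠ b)
    {Ps : Finset (G.Path a b)} (hPs : PairwiseInternallyDisjoint Ps) :
    (Ps.card : ℕ∞) ≤ (G.neighborSet a).encard := by
  rw [← Set.encard_coe_eq_coe_finsetCard]
  refine Set.encard_le_encard_of_injOn (f := fun p : G.Path a b => p.1.snd)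
    (fun p _ => p.1.adj_snd (Walk.not_nil_of_ne hab)) ?_
  intro p hp q hq (hpq : p.1.snd = q.1.snd)
  by_contra hne
  have hp_snd := p.1.snd_mem_tail_support (Walk.not_nil_of_ne hab)
  have hq_snd := q.1.snd_mem_tail_support (Walk.not_nil_of_ne hab)
  rcases hPs p hp q hq hne _ (List.mem_of_mem_tail hp_snd)
      (hpq ▸ List.mem_of_mem_tail hq_snd) with h | h
  · exact (p.1.adj_snd (Walk.not_nil_of_ne hab)).ne h.symm
  · exact hne (path_eq_of_snd_eq hab h (hpq ▸ h))

lemma localConn_le_encard_neighborSet (hab : a ≠ b) :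
    localConn G a b ≤ (G.neighborSet a).encard := by
  rw [localConn_of_ne hab]
  refine sSup_le ?_
  rintro _ ⟨Ps, hPs, rfl⟩
  exact hPs.card_le_encard_neighborSet hab

lemma exists_path_snd_eq {x : V} (hab : a ≠ b) (hax : G.Adj a x) (hxb : x = b ∨ G.Adj x b) :
    ∃ p : G.Path a b, p.1.snd = x ∧ ∀ y ∈ p.1.support, y = a ∨ y = x ∨ y = b := by
  rcases hxb with rfl | hxb
  · exact ⟨Path.singleton hax, by simp [Path.singleton]⟩
  · refine ⟨⟨Walk.cons hax (Walk.cons hxb Walk.nil), ?_⟩, by simp⟩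
    simp [Walk.cons_isPath_iff, hax.ne, hxb.ne, hab]

lemma encard_neighborSet_le_localConn (hab : a ≠ b) (hfin : (G.neighborSet a).Finite)
    (hsub : ∀ x, G.Adj a x → x ≠ b → G.Adj b x) :
    (G.neighborSet a).encard ≤ localConn G a b := by
  classical
  have := hfin.fintype
  choose f hf_snd hf_support using fun x : G.neighborSet a =>
    exists_path_snd_eq hab x.2 ((eq_or_ne x.1 b).imp_right fun hxb => (hsub x x.2 hxb).symm)
  have hf_inj : Function.Injective f := fun x y hxy =>
    Subtype.ext ((hf_snd x).symm.trans (hxy ▸ hf_snd y))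
  have hdisj : PairwiseInternallyDisjoint (Finset.univ.image f) := by
    intro p hp q hq hpq z hzp hzq
    obtain ⟨x, -, rfl⟩ := Finset.mem_image.1 hp
    obtain ⟨y, -, rfl⟩ := Finset.mem_image.1 hq
    have hxy : x.1 ≠ y.1 := fun h => hpq (congrArg f (Subtype.ext h))
    rcases hf_support x z hzp with h | h | h <;> rcases hf_support y z hzq with h' | h' | h' <;>
      first | exact Or.inl ‹_› | exact Or.inr ‹_› | exact absurd (h.symm.trans h') hxy
  rw [localConn_of_ne hab]
  refine le_sSup ⟨_, hdisj, ?_⟩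
  rw [Finset.card_image_of_injective _ hf_inj, Finset.card_univ, ← ENat.card_coe_set_eq,
    ENat.card_eq_coe_fintype_card]

lemma localConn_eq_min_of_forall_adj (hab : a ≠ b) (hfin : (G.neighborSet a).Finite)
    (hsub : ∀ x, G.Adj a x → x ≠ b → G.Adj b x) :
    localConn G a b = min (G.neighborSet a).encard (G.neighborSet b).encard := by
  have h_eq := le_antisymm (localConn_le_encard_neighborSet hab)
    (encard_neighborSet_le_localConn hab hfin hsub)
  have h_le : (G.neighborSet a).encard ≤ (G.neighborSet b).encard :=
    h_eq ▸ localConn_comm G a b ▸ localConn_le_encard_neighborSet hab.symm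
  rw [h_eq, min_eq_left h_le]

end LocalConnectivity

lemma thresholdGraph_adj {L : List Bool} {i j : Fin L.length} :
    (thresholdGraph L).Adj i j ↔
      i ≠ j ∧ ((i < j ∧ L.get j = true) ∨ (j < i ∧ L.get i = true)) :=
  fromRel_adj _ _ _

/-- Neighbourhoods in a threshold graph are nested: if the later vertex `w` was added as
dominating it sees every neighbour of `v`, otherwise every neighbour of `w` was added later as a
dominating vertex and so also sees `v`. -/
lemma thresholdGraph_forall_adj_or_forall_adj {L : List Bool} {v w : Fin L.length} (hvw : v ≠ w) :
    (∀ x, (thresholdGraph L).Adj v x → x ≠ w → (thresholdGraph L).Adj w x) ∨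
      (∀ x, (thresholdGraph L).Adj w x → x ≠ v → (thresholdGraph L).Adj v x) := by
  wlog hlt : v < w generalizing v w
  · exact (this hvw.symm (hvw.lt_or_gt.resolve_left hlt)).symm
  simp only [thresholdGraph_adj]
  by_cases hw : L.get w = true
  · left
    intro x hvx hxw
    rcases lt_or_gt_of_ne hxw with hxw' | hxw'
    · exact ⟨hxw.symm, .inr ⟨hxw', hw⟩⟩
    · refine ⟨hxw.symm, .inl ⟨hxw', ?_⟩⟩
      rcases hvx.2 with ⟨-, hx⟩ | ⟨hxv, -⟩
      · exact hx
      · exact absurd (hxv.trans (hlt.trans hxw')) (lt_irrefl x)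
  · right
    rintro x ⟨-, ⟨hwx, hx⟩ | ⟨-, hw'⟩⟩ hxv
    · exact ⟨hxv.symm, .inl ⟨hlt.trans hwx, hx⟩⟩
    · exact absurd hw' hw

/-- every threshold graph is maximally locally connected:
`κ(v,w) = min (deg v) (deg w)` for all pairs of distinct vertices. -/
theorem stmt18 (L : List Bool) (v w : Fin L.length) (hvw : v ≠ w) :
    localConn (thresholdGraph L) v w =
      ((min ((thresholdGraph L).neighborSet v).ncard
            ((thresholdGraph L).neighborSet w).ncard : ℕ) : ℕ∞) := by
  rw [Nat.mono_cast.map_min, Set.Finite.cast_ncard_eq (Set.toFinite _),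
    Set.Finite.cast_ncard_eq (Set.toFinite _)]
  rcases thresholdGraph_forall_adj_or_forall_adj hvw with hsub | hsub
  · exact localConn_eq_min_of_forall_adj hvw (Set.toFinite _) hsub
  · rw [localConn_comm, min_comm]
    exact localConn_eq_min_of_forall_adj hvw.symm (Set.toFinite _) hsub

end ConnDim
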